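/- Let H be a chain graph and U, L ∈ C_H form a meta-arrow U ⇒ L. Then merging of U ⇒ L is feasible if and only if pa_H(L) is a clique in the closure graph clo_H(U). Moreover, if merging is feasible and H' is the resulting graph with merged chain component M, then pa_H(L) is a clique in clo_{H'}(M). -/

import Mathlib

open scoped Classical BigOperators

variable {V : Type} [Fintype V] [DecidableEq V]

/-! ### Imsets -/

abbrev Imset (V : Type) := Finset V → ℤ

noncomputable def deltaIm (A : Finset V) : Imset V := fun B => if B = A then 1 else 0

noncomputable def semiElem (A B C : Finset V) : Imset V :=
  deltaIm (A ∪ B ∪ C) + deltaIm C - deltaIm (A ∪ C) - deltaIm (B ∪ C)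

def ElemValid (a b : V) (C : Finset V) : Prop := a ≠ b ∧ a ∉ C ∧ b ∉ C

noncomputable def elemOf (t : V × V × Finset V) : Imset V :=
  semiElem {t.1} {t.2.1} t.2.2

/-- A combinatorial imset: a nonnegative integer combination of elementary imsets. -/
def IsCombinatorial (u : Imset V) : Prop :=
  ∃ n : V × V × Finset V → ℕ,
    (∀ t, n t ≠ 0 → ElemValid t.1 t.2.1 t.2.2) ∧
    u = ∑ t : V × V × Finset V, (n t : ℤ) • elemOf t

/-- A structural imset: an (integer-valued) element of the convex cone
generated by the elementary imsets. -/
def IsStructural (u : Imset V) : Prop :=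
  ∃ c : V × V × Finset V → ℝ,
    (∀ t, 0 ≤ c t) ∧ (∀ t, c t ≠ 0 → ElemValid t.1 t.2.1 t.2.2) ∧
    ∀ A : Finset V, (u A : ℝ) = ∑ t : V × V × Finset V, c t * ((elemOf t) A : ℝ)

def DisjointTriple (A B C : Finset V) : Prop :=
  Disjoint A B ∧ Disjoint A C ∧ Disjoint B C

/-- The conditional independence statement induced by a (structural) imset. -/
def imsetCI (u : Imset V) (A B C : Finset V) : Prop :=
  ∃ k : ℕ, IsStructural ((k : ℤ) • u - semiElem A B C)

/-! ### Undirected graph notions, relative to a vertex set `W` -/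

def WalkIn (W : Finset V) {G : SimpleGraph V} {u v : V} (p : G.Walk u v) : Prop :=
  ∀ x ∈ p.support, x ∈ W

/-- `C` separates `A` from `B` in the subgraph of `G` induced on `W`. -/
def SeparatesIn (G : SimpleGraph V) (W A B C : Finset V) : Prop :=
  ∀ a ∈ A, ∀ b ∈ B, ∀ p : G.Walk a b, WalkIn W p → ∃ c ∈ C, c ∈ p.support

/-- The subgraph of `G` induced on `W` is chordal: every cycle of length ≥ 4 within `W`
has a chord. -/
def ChordalIn (G : SimpleGraph V) (W : Finset V) : Prop :=
  ∀ (v : V) (p : G.Walk v v), p.IsCycle → WalkIn W p → 4 ≤ p.length →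
    ∃ a b, a ∈ p.support ∧ b ∈ p.support ∧ G.Adj a b ∧ s(a, b) ∉ p.edges

def EdgesWithin (G : SimpleGraph V) (W : Finset V) : Prop :=
  ∀ a b, G.Adj a b → a ∈ W ∧ b ∈ W

/-- `G` is a triangulation of (the subgraph of) `H` (induced on `W`): a decomposable
(chordal) graph on the vertex set `W` containing all the edges of `H` within `W`. -/
def IsTriangulationIn (H : SimpleGraph V) (W : Finset V) (G : SimpleGraph V) : Prop :=
  EdgesWithin G W ∧ (∀ a b, H.Adj a b → a ∈ W → b ∈ W → G.Adj a b) ∧ ChordalIn G W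

/-- A minimal triangulation: no triangulation has a strictly smaller edge set. -/
def IsMinTriIn (H : SimpleGraph V) (W : Finset V) (G : SimpleGraph V) : Prop :=
  IsTriangulationIn H W G ∧ ∀ G', IsTriangulationIn H W G' → ¬ G' < G

/-- `𝔗(H_W)`, the set of minimal triangulations. -/
def minTris (H : SimpleGraph V) (W : Finset V) : Set (SimpleGraph V) :=
  {G | IsMinTriIn H W G}

/-- The induced subgraph on `W`, kept as a graph on the ambient vertex type. -/
def inducedSG (G : SimpleGraph V) (W : Finset V) : SimpleGraph V where
  Adj a b := G.Adj a b ∧ a ∈ W ∧ b ∈ W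
  symm := ⟨fun a b h => ⟨h.1.symm, h.2.2, h.2.1⟩⟩
  loopless := ⟨fun a h => G.loopless.irrefl a h.1⟩

/-- Maximal cliques of the subgraph induced on `W`. -/
def IsMaxCliqueIn (G : SimpleGraph V) (W K : Finset V) : Prop :=
  K ⊆ W ∧ G.IsClique (K : Set V) ∧
    ∀ K' : Finset V, K' ⊆ W → G.IsClique (K' : Set V) → K ⊆ K' → K = K'

def ReachIn (G : SimpleGraph V) (W : Finset V) (u v : V) : Prop :=
  ∃ p : G.Walk u v, WalkIn W p

/-- `S` is a `(u,v)`-separator in the subgraph induced on `W`. -/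
def SepPairIn (G : SimpleGraph V) (W S : Finset V) (u v : V) : Prop :=
  u ∈ W ∧ v ∈ W ∧ u ∉ S ∧ v ∉ S ∧
    ∀ p : G.Walk u v, WalkIn W p → ∃ s ∈ S, s ∈ p.support

/-- A clique separator of the subgraph induced on `W`. -/
def IsCliqueSepIn (G : SimpleGraph V) (W S : Finset V) : Prop :=
  S ⊆ W ∧ G.IsClique (S : Set V) ∧ ∃ u v, ReachIn G W u v ∧ SepPairIn G W S u v

/-- The subgraph induced on `W` is prime: it has no clique separator. -/
def IsPrimeIn (G : SimpleGraph V) (W : Finset V) : Prop :=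
  ¬ ∃ S, IsCliqueSepIn G W S

/-- `U` is a maximal prime component of the subgraph induced on `W`. -/
def IsMpCompIn (G : SimpleGraph V) (W U : Finset V) : Prop :=
  U ⊆ W ∧ IsPrimeIn G U ∧ ∀ U', U' ⊆ W → IsPrimeIn G U' → U ⊆ U' → U = U'

/-- `S` is a minimal vertex separator of the subgraph induced on `W`. -/
def IsMinVtxSepIn (G : SimpleGraph V) (W S : Finset V) : Prop :=
  S ⊆ W ∧ ∃ u v, SepPairIn G W S u v ∧ ∀ S', S' ⊂ S → ¬ SepPairIn G W S' u v

/-- The set of clique minimal vertex separators of the subgraph induced on `W`. -/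
def cmvs (G : SimpleGraph V) (W : Finset V) : Set (Finset V) :=
  {S | G.IsClique (S : Set V) ∧ IsMinVtxSepIn G W S}

/-! ### Running intersection orderings and standard imsets -/

def unionTake (l : List (Finset V)) (i : ℕ) : Finset V :=
  (l.take i).foldr (· ∪ ·) ∅

def sepAt (l : List (Finset V)) (i : ℕ) : Finset V :=
  l.getD i ∅ ∩ unionTake l i

/-- `l` is an ordering, with the running intersection property, of the family `F`. -/
def IsRIPList (F : Finset V → Prop) (l : List (Finset V)) : Prop :=
  l.Nodup ∧ (∀ X, X ∈ l ↔ F X) ∧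
    ∀ i, 0 < i → i < l.length → ∃ k, k < i ∧ sepAt l i ⊆ l.getD k ∅

noncomputable def ripList (F : Finset V → Prop) : List (Finset V) :=
  if h : ∃ l, IsRIPList F l then h.choose else []

/-- The multiplicity `ν(S)`: the number of indices `i ≥ 1` with `S_i = S` in a
running intersection ordering of the family `F`. -/
noncomputable def nuOf (F : Finset V → Prop) (S : Finset V) : ℕ :=
  (List.range (ripList F).length).countP
    (fun i => decide (0 < i ∧ sepAt (ripList F) i = S))

/-- The standard imset of a decomposable graph (induced on `W`),
`u_G = δ_W − Σ_{K ∈ K_G} δ_K + Σ_{S ∈ S_G} ν_G(S)·δ_S`. -/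
noncomputable def uDec (G : SimpleGraph V) (W : Finset V) : Imset V :=
  deltaIm W - (∑ᶠ K ∈ {K : Finset V | IsMaxCliqueIn G W K}, deltaIm K)
    + ∑ᶠ S ∈ cmvs G W, (nuOf (IsMaxCliqueIn G W) S : ℤ) • deltaIm S

/-- The standard imset of a general undirected graph (induced on `W`). -/
noncomputable def uUG (G : SimpleGraph V) (W : Finset V) : Imset V :=
  deltaIm W - (∑ᶠ U ∈ {U : Finset V | IsMpCompIn G W U}, deltaIm U)
    + (∑ᶠ S ∈ cmvs G W, (nuOf (IsMpCompIn G W) S : ℤ) • deltaIm S)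
    + ∑ᶠ U ∈ {U : Finset V | IsMpCompIn G W U},
        ∑ᶠ G' ∈ minTris (inducedSG G U) U, uDec G' U

/-! ### Chain graphs -/

/-- A mixed graph: `Adj a b ∧ Adj b a` is an undirected edge `a — b`,
`Adj a b ∧ ¬ Adj b a` is a directed edge `a → b`. -/
structure MixedGraph (V : Type) where
  Adj : V → V → Prop
  irrefl : ∀ a, ¬ Adj a a

def MixedGraph.UndirEdge (G : MixedGraph V) (a b : V) : Prop := G.Adj a b ∧ G.Adj b a

def MixedGraph.DirEdge (G : MixedGraph V) (a b : V) : Prop := G.Adj a b ∧ ¬ G.Adj b a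

/-- A chain graph: no directed cycles (no cycle containing a directed edge). -/
def IsChainGraph (G : MixedGraph V) : Prop :=
  ∀ a b, G.DirEdge a b → ¬ Relation.ReflTransGen G.Adj b a

/-- The underlying (undirected) graph of a mixed graph. -/
def MixedGraph.underlying (G : MixedGraph V) : SimpleGraph V where
  Adj a b := a ≠ b ∧ (G.Adj a b ∨ G.Adj b a)
  symm := by
    constructor
    intro a b h
    exact ⟨h.1.symm, h.2.symm⟩
  loopless := ⟨fun a h => h.1 rfl⟩

/-- The undirected part of a mixed graph. -/
def MixedGraph.ugPart (G : MixedGraph V) : SimpleGraph V where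
  Adj a b := G.Adj a b ∧ G.Adj b a
  symm := ⟨fun a b h => ⟨h.2, h.1⟩⟩
  loopless := ⟨fun a h => G.irrefl a h.1⟩

/-- The chain component containing `v` : the connectivity component of `v`
after removing all directed edges. -/
noncomputable def chainComp (G : MixedGraph V) (v : V) : Finset V :=
  Finset.univ.filter fun u => (MixedGraph.ugPart G).Reachable v u

/-- The set of chain components. -/
noncomputable def chainComps (G : MixedGraph V) : Finset (Finset V) :=
  Finset.univ.image (chainComp G)

/-- The parent set of `C`: vertices outside `C` with a directed edge into `C`. -/
noncomputable def paSet (G : MixedGraph V) (C : Finset V) : Finset V :=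
  Finset.univ.filter fun a => a ∉ C ∧ ∃ b ∈ C, G.DirEdge a b

/-- The ancestral set of `K`. -/
noncomputable def anSet (G : MixedGraph V) (K : Finset V) : Finset V :=
  Finset.univ.filter fun a => ∃ k ∈ K, Relation.ReflTransGen G.Adj a k

/-- The induced sub-mixed-graph on `W` (on the ambient vertex type). -/
def inducedM (G : MixedGraph V) (W : Finset V) : MixedGraph V where
  Adj a b := G.Adj a b ∧ a ∈ W ∧ b ∈ W
  irrefl := fun a h => G.irrefl a h.1

/-- The moral graph: the underlying graph together with edges joining any two
vertices that are parents of a common chain component. -/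
noncomputable def moralG (G : MixedGraph V) : SimpleGraph V where
  Adj a b := a ≠ b ∧
    (G.Adj a b ∨ G.Adj b a ∨ ∃ C ∈ chainComps G, a ∈ paSet G C ∧ b ∈ paSet G C)
  symm := by
    constructor
    intro a b h
    refine ⟨h.1.symm, ?_⟩
    rcases h.2 with h' | h' | ⟨C, hC, ha, hb⟩
    · exact Or.inr (Or.inl h')
    · exact Or.inl h'
    · exact Or.inr (Or.inr ⟨C, hC, hb, ha⟩)
  loopless := ⟨fun a h => h.1 rfl⟩

/-- The closure graph `clo_H(C) = (H_{C ∪ pa(C)})^mor`. -/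
noncomputable def clo (G : MixedGraph V) (C : Finset V) : SimpleGraph V :=
  moralG (inducedM G (C ∪ paSet G C))

/-- The separation criterion for chain graphs:
`C` separates `A` from `B` in `(H_{an(A∪B∪C)})^mor`. -/
noncomputable def cgCI (G : MixedGraph V) (A B C : Finset V) : Prop :=
  SeparatesIn (moralG (inducedM G (anSet G (A ∪ B ∪ C)))) Finset.univ A B C

/-- Two mixed graphs are (Markov) equivalent if they induce the same independence model. -/
noncomputable def CGEquiv (G H : MixedGraph V) : Prop :=
  ∀ A B C : Finset V, DisjointTriple A B C → (cgCI G A B C ↔ cgCI H A B C)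

/-- A directed acyclic graph: all edges directed, no directed cycles. -/
def IsDAG (G : MixedGraph V) : Prop :=
  (∀ a b, G.Adj a b → ¬ G.Adj b a) ∧ IsChainGraph G

/-- A triangulation of a chain graph `H`: a chain graph containing every undirected and
every directed edge of `H` which is equivalent to some directed acyclic graph. -/
noncomputable def IsCGTri (H G : MixedGraph V) : Prop :=
  IsChainGraph G ∧
  (∀ a b, H.UndirEdge a b → G.UndirEdge a b) ∧
  (∀ a b, H.DirEdge a b → G.DirEdge a b) ∧
  ∃ D : MixedGraph V, IsDAG D ∧ CGEquiv G D

def mEdges (G : MixedGraph V) : Set (V × V) := {p | G.Adj p.1 p.2}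

/-- A minimal triangulation of the chain graph `H`: no triangulation of `H`
has a strictly smaller edge set. -/
noncomputable def IsCGMinTri (H G : MixedGraph V) : Prop :=
  IsCGTri H G ∧ ∀ G', IsCGTri H G' → ¬ mEdges G' ⊂ mEdges G

/-- The standard imset of a chain graph. -/
noncomputable def uCG (H : MixedGraph V) : Imset V :=
  deltaIm Finset.univ - deltaIm ∅ +
    ∑ C ∈ chainComps H,
      (deltaIm (paSet H C) - deltaIm (C ∪ paSet H C) + uUG (clo H C) (C ∪ paSet H C))

/-- `U ⇒ L` is a meta-arrow. -/
def MetaArrow (H : MixedGraph V) (U L : Finset V) : Prop :=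
  U ∈ chainComps H ∧ L ∈ chainComps H ∧ U ≠ L ∧ ∃ a ∈ U, ∃ b ∈ L, H.DirEdge a b

/-- The graph obtained by merging the meta-arrow `U ⇒ L`: every directed edge from `U`
to `L` is replaced by an undirected edge. -/
def mergeGraph (H : MixedGraph V) (U L : Finset V) : MixedGraph V where
  Adj x y := H.Adj x y ∨ (H.DirEdge y x ∧ y ∈ U ∧ x ∈ L)
  irrefl := fun a h => by
    rcases h with h | ⟨⟨h, _⟩, _⟩ <;> exact H.irrefl a h

/-- Feasibility of merging the meta-arrow `U ⇒ L`. -/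
def FeasibleMerge (H : MixedGraph V) (U L : Finset V) : Prop :=
  MetaArrow H U L ∧
  (MixedGraph.underlying H).IsClique ((paSet H L ∩ U : Finset V) : Set V) ∧
  ∀ b ∈ paSet H L ∩ U, paSet H L \ U ⊆ paSet H ({b} : Finset V)

/-!
In a chain graph no directed edge leaves a chain component `U` towards `U ∪ pa(U)`, so a
vertex of `U` is adjacent in `clo(U)` only to its `H`-neighbours and `H`-parents; for the
vertices of `pa(L)` this turns cliqueness in `clo(U)` into the two feasibility conditions.
Conversely, feasibility splits `pa(L)` into the clique `K = pa(L) ∩ U` inside the component and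
the set `pa(L) ∖ U` of vertices pointing into every vertex of `K`; two vertices of the latter
are married in the moral graph as common parents of the component of a vertex of `K`. The same
splitting works in the merged graph, whose merged component is `U ∪ L`.
-/

set_option linter.unusedSectionVars false

theorem mem_chainComp_iff {G : MixedGraph V} {v u : V} :
    u ∈ chainComp G v ↔ G.ugPart.Reachable v u := by
  simp [chainComp]

theorem eq_chainComp_of_mem {G : MixedGraph V} {C : Finset V} (hC : C ∈ chainComps G) {v : V}
    (hv : v ∈ C) : C = chainComp G v := by
  obtain ⟨w, -, rfl⟩ := Finset.mem_image.mp hC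
  ext u
  simp only [mem_chainComp_iff]
  exact ⟨(mem_chainComp_iff.mp hv).symm.trans, (mem_chainComp_iff.mp hv).trans⟩

theorem mem_of_reachable {G : MixedGraph V} {C : Finset V} (hC : C ∈ chainComps G) {v u : V}
    (hv : v ∈ C) (h : G.ugPart.Reachable v u) : u ∈ C := by
  rw [eq_chainComp_of_mem hC hv]
  exact mem_chainComp_iff.mpr h

theorem chainComp_subset_of_forall_adj {G : MixedGraph V} {S : Finset V} {v : V} (hv : v ∈ S)
    (hS : ∀ p q, p ∈ S → G.ugPart.Adj p q → q ∈ S) : chainComp G v ⊆ S := by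
  intro u hu
  have hvu := (SimpleGraph.reachable_iff_reflTransGen _ _).mp (mem_chainComp_iff.mp hu)
  clear hu
  induction hvu with
  | refl => exact hv
  | tail _ hpq ih => exact hS _ _ ih hpq

theorem ugPart_inducedM_le (G : MixedGraph V) (W : Finset V) :
    (inducedM G W).ugPart ≤ G.ugPart :=
  fun _ _ h => ⟨h.1.1, h.2.1⟩

theorem chainComp_inducedM_subset {G : MixedGraph V} {C W : Finset V} (hC : C ∈ chainComps G)
    {c : V} (hc : c ∈ C) : chainComp (inducedM G W) c ⊆ C := fun _ hu =>
  mem_of_reachable hC hc ((mem_chainComp_iff.mp hu).mono (ugPart_inducedM_le G W))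

theorem reflTransGen_adj_of_reachable {G : MixedGraph V} {a b : V}
    (h : G.ugPart.Reachable a b) : Relation.ReflTransGen G.Adj a b :=
  Relation.ReflTransGen.mono (p := G.Adj) (fun _ _ hab => hab.1) _ _
    ((SimpleGraph.reachable_iff_reflTransGen _ _).mp h)

theorem mem_paSet_of_dirEdge {G : MixedGraph V} {C : Finset V} {a b : V} (ha : a ∉ C)
    (hb : b ∈ C) (hab : G.DirEdge a b) : a ∈ paSet G C :=
  Finset.mem_filter.mpr ⟨Finset.mem_univ a, ha, b, hb, hab⟩

theorem notMem_of_mem_paSet {G : MixedGraph V} {C : Finset V} {a : V} (ha : a ∈ paSet G C) :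
    a ∉ C :=
  (Finset.mem_filter.mp ha).2.1

theorem MixedGraph.DirEdge.underlying_adj {G : MixedGraph V} {a b : V} (h : G.DirEdge a b) :
    G.underlying.Adj a b :=
  ⟨fun hab => G.irrefl a (hab ▸ h.1), Or.inl h.1⟩

theorem inducedM_dirEdge_iff {G : MixedGraph V} {W : Finset V} {a b : V} :
    (inducedM G W).DirEdge a b ↔ G.DirEdge a b ∧ a ∈ W ∧ b ∈ W := by
  simp only [MixedGraph.DirEdge, inducedM]
  tauto

theorem IsChainGraph.not_dirEdge_of_mem {H : MixedGraph V} (hH : IsChainGraph H)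
    {U : Finset V} (hU : U ∈ chainComps H) {x c : V} (hx : x ∈ U) (hc : c ∈ U ∪ paSet H U) :
    ¬ H.DirEdge x c := by
  intro hxc
  apply hH x c hxc
  rcases Finset.mem_union.mp hc with hc | hc
  · rw [eq_chainComp_of_mem hU hc] at hx
    exact reflTransGen_adj_of_reachable (mem_chainComp_iff.mp hx)
  · obtain ⟨-, -, u, hu, hcu⟩ := Finset.mem_filter.mp hc
    rw [eq_chainComp_of_mem hU hu] at hx
    exact .head hcu.1 (reflTransGen_adj_of_reachable (mem_chainComp_iff.mp hx))

theorem IsChainGraph.adj_of_clo_adj {H : MixedGraph V} (hH : IsChainGraph H) {U : Finset V}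
    (hU : U ∈ chainComps H) {x y : V} (hx : x ∈ U) (h : (clo H U).Adj y x) : H.Adj y x := by
  obtain ⟨-, hyx | hxy | ⟨C, -, -, hxC⟩⟩ := h
  · exact hyx.1
  · by_contra hyx
    exact hH.not_dirEdge_of_mem hU hx hxy.2.2 ⟨hxy.1, hyx⟩
  · obtain ⟨-, -, c, -, hxc⟩ := Finset.mem_filter.mp hxC
    obtain ⟨hxc, -, hcW⟩ := inducedM_dirEdge_iff.mp hxc
    exact (hH.not_dirEdge_of_mem hU hx hcW hxc).elim

theorem clo_adj_of_underlying_adj {G : MixedGraph V} {C : Finset V} {a b : V}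
    (ha : a ∈ C ∪ paSet G C) (hb : b ∈ C ∪ paSet G C) (h : G.underlying.Adj a b) :
    (clo G C).Adj a b :=
  ⟨h.1, h.2.imp (fun h => ⟨h, ha, hb⟩) fun h => Or.inl ⟨h, hb, ha⟩⟩

theorem clo_adj_of_dirEdge_of_dirEdge {G : MixedGraph V} {C : Finset V}
    (hC : C ∈ chainComps G) {a b c : V} (hab : a ≠ b) (hc : c ∈ C) (ha : a ∉ C) (hb : b ∉ C)
    (hac : G.DirEdge a c) (hbc : G.DirEdge b c) : (clo G C).Adj a b := by
  have hpa : ∀ x ∉ C, G.DirEdge x c →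
      x ∈ paSet (inducedM G (C ∪ paSet G C)) (chainComp (inducedM G (C ∪ paSet G C)) c) :=
    fun x hx hxc => mem_paSet_of_dirEdge (fun h => hx (chainComp_inducedM_subset hC hc h))
      (mem_chainComp_iff.mpr .rfl) (inducedM_dirEdge_iff.mpr ⟨hxc,
        Finset.mem_union_right _ (mem_paSet_of_dirEdge hx hc hxc), Finset.mem_union_left _ hc⟩)
  exact ⟨hab, Or.inr (Or.inr ⟨_, Finset.mem_image_of_mem _ (Finset.mem_univ c),
    hpa a ha hac, hpa b hb hbc⟩)⟩

theorem isClique_clo_union {G : MixedGraph V} {C A B : Finset V} (hC : C ∈ chainComps G)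
    (hAC : A ⊆ C) (hA : A.Nonempty) (hAcl : G.underlying.IsClique (A : Set V))
    (hBC : Disjoint B C) (hBA : ∀ b ∈ B, ∀ a ∈ A, G.DirEdge b a) :
    (clo G C).IsClique ((A ∪ B : Finset V) : Set V) := by
  obtain ⟨c, hc⟩ := hA
  have hB : ∀ b ∈ B, b ∉ C := fun b hb => Finset.disjoint_left.mp hBC hb
  have hBpa : ∀ b ∈ B, b ∈ C ∪ paSet G C := fun b hb =>
    Finset.mem_union_right _ (mem_paSet_of_dirEdge (hB b hb) (hAC hc) (hBA b hb c hc))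
  have : Std.Symm (clo G C).Adj := ⟨fun _ _ h => h.symm⟩
  rw [Finset.coe_union, SimpleGraph.IsClique, Set.pairwise_union_of_symm]
  refine ⟨fun x hx y hy hxy => ?_, fun x hx y hy hxy => ?_, fun x hx y hy _ => ?_⟩
  · exact clo_adj_of_underlying_adj (Finset.mem_union_left _ (hAC hx))
      (Finset.mem_union_left _ (hAC hy)) (hAcl hx hy hxy)
  · exact clo_adj_of_dirEdge_of_dirEdge hC hxy (hAC hc) (hB x hx) (hB y hy)
      (hBA x hx c hc) (hBA y hy c hc)
  · exact (clo_adj_of_underlying_adj (hBpa y hy) (Finset.mem_union_left _ (hAC hx))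
      (hBA y hy x hx).underlying_adj).symm

theorem MetaArrow.nonempty_paSet_inter {H : MixedGraph V} {U L : Finset V}
    (hma : MetaArrow H U L) : (paSet H L ∩ U).Nonempty := by
  obtain ⟨hU, hL, hUL, a, haU, b, hbL, hab⟩ := hma
  have haL : a ∉ L := fun haL =>
    hUL ((eq_chainComp_of_mem hU haU).trans (eq_chainComp_of_mem hL haL).symm)
  exact ⟨a, Finset.mem_inter.mpr ⟨mem_paSet_of_dirEdge haL hbL hab, haU⟩⟩

theorem FeasibleMerge.dirEdge {H : MixedGraph V} {U L : Finset V} (hF : FeasibleMerge H U L)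
    {b y : V} (hb : b ∈ paSet H L ∩ U) (hy : y ∈ paSet H L \ U) : H.DirEdge y b := by
  obtain ⟨-, -, k, hk, hyk⟩ := Finset.mem_filter.mp (hF.2.2 b hb hy)
  rwa [Finset.mem_singleton.mp hk] at hyk

theorem feasibleMerge_of_isClique_clo {H : MixedGraph V} (hH : IsChainGraph H) {U L : Finset V}
    (hma : MetaArrow H U L) (hcl : (clo H U).IsClique (paSet H L : Set V)) :
    FeasibleMerge H U L := by
  refine ⟨hma, fun x hx z hz hxz => ?_, fun b hb y hy => ?_⟩
  · obtain ⟨hxL, -⟩ := Finset.mem_inter.mp hx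
    obtain ⟨hzL, hzU⟩ := Finset.mem_inter.mp hz
    exact ⟨hxz, Or.inl (hH.adj_of_clo_adj hma.1 hzU (hcl hxL hzL hxz))⟩
  · obtain ⟨hbL, hbU⟩ := Finset.mem_inter.mp hb
    obtain ⟨hyL, hyU⟩ := Finset.mem_sdiff.mp hy
    have hyb : y ≠ b := fun h => hyU (h ▸ hbU)
    have hyb_adj : H.Adj y b := hH.adj_of_clo_adj hma.1 hbU (hcl hyL hbL hyb)
    have hby : ¬ H.Adj b y := fun hby =>
      hyU (mem_of_reachable hma.1 hbU (show H.ugPart.Adj b y from ⟨hby, hyb_adj⟩).reachable)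
    exact mem_paSet_of_dirEdge (Finset.notMem_singleton.mpr hyb) (Finset.mem_singleton_self b)
      ⟨hyb_adj, hby⟩

theorem underlying_le_underlying_mergeGraph (H : MixedGraph V) (U L : Finset V) :
    H.underlying ≤ (mergeGraph H U L).underlying :=
  fun _ _ h => ⟨h.1, h.2.imp Or.inl Or.inl⟩

theorem MixedGraph.DirEdge.mergeGraph {H : MixedGraph V} {U L : Finset V} {y b : V}
    (h : H.DirEdge y b) (hy : y ∉ U) : (mergeGraph H U L).DirEdge y b :=
  ⟨Or.inl h.1, fun h' => h'.elim h.2 fun h'' => hy h''.2.1⟩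

theorem mergeGraph_chainComp_subset {H : MixedGraph V} {U L M : Finset V}
    (hU : U ∈ chainComps H) (hL : L ∈ chainComps H) (hM : M ∈ chainComps (mergeGraph H U L))
    {v : V} (hvU : v ∈ U) (hvM : v ∈ M) : M ⊆ U ∪ L := by
  rw [eq_chainComp_of_mem hM hvM]
  refine chainComp_subset_of_forall_adj (Finset.mem_union_left _ hvU) ?_
  rintro p q hp ⟨hpq | ⟨-, hqU, -⟩, hqp | ⟨-, -, hqL⟩⟩
  · have hreach : H.ugPart.Reachable p q := (show H.ugPart.Adj p q from ⟨hpq, hqp⟩).reachable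
    rcases Finset.mem_union.mp hp with hp | hp
    exacts [Finset.mem_union_left _ (mem_of_reachable hU hp hreach),
      Finset.mem_union_right _ (mem_of_reachable hL hp hreach)]
  · exact Finset.mem_union_right _ hqL
  all_goals exact Finset.mem_union_left _ hqU

/-- Merging of a meta-arrow `U ⇒ L` is feasible iff `pa_H(L)` is a
clique in the closure graph `clo_H(U)`; moreover, if merging is feasible then `pa_H(L)`
is a clique in `clo_{H'}(M)` for the merged chain component `M` of the resulting graph. -/
theorem feasible_merging_iff_parents_clique
    {V : Type} [Fintype V] [DecidableEq V] (H : MixedGraph V)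
    (hH : IsChainGraph H) (U L : Finset V) (hma : MetaArrow H U L) :
    (FeasibleMerge H U L ↔ (clo H U).IsClique ((paSet H L : Finset V) : Set V)) ∧
    (FeasibleMerge H U L →
      ∀ M : Finset V, M ∈ chainComps (mergeGraph H U L) → U ∪ L ⊆ M →
        (clo (mergeGraph H U L) M).IsClique ((paSet H L : Finset V) : Set V)) := by
  have hsplit : paSet H L = paSet H L ∩ U ∪ paSet H L \ U := (sup_inf_sdiff _ _).symm
  have hdir (hF : FeasibleMerge H U L) : ∀ y ∈ paSet H L \ U, ∀ b ∈ paSet H L ∩ U,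
      H.DirEdge y b := fun _ hy _ hb => hF.dirEdge hb hy
  refine ⟨⟨fun hF => ?_, feasibleMerge_of_isClique_clo hH hma⟩, fun hF M hM hULM => ?_⟩
  · rw [hsplit]
    exact isClique_clo_union hma.1 Finset.inter_subset_right hma.nonempty_paSet_inter hF.2.1
      Finset.sdiff_disjoint (hdir hF)
  · obtain ⟨a, ha⟩ := hma.nonempty_paSet_inter
    have haU := (Finset.mem_inter.mp ha).2
    have hMUL := mergeGraph_chainComp_subset hma.1 hma.2.1 hM haU
      (hULM (Finset.mem_union_left _ haU))
    have hBM : Disjoint (paSet H L \ U) M := Finset.disjoint_left.mpr fun y hy hyM =>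
      (Finset.mem_union.mp (hMUL hyM)).elim (Finset.mem_sdiff.mp hy).2
        (notMem_of_mem_paSet (Finset.mem_sdiff.mp hy).1)
    rw [hsplit]
    exact isClique_clo_union hM (Finset.inter_subset_right.trans
        (Finset.subset_union_left.trans hULM)) ⟨a, ha⟩
      (hF.2.1.mono (underlying_le_underlying_mergeGraph H U L)) hBM
      fun y hy b hb => (hdir hF y hy b hb).mergeGraph (Finset.mem_sdiff.mp hy).2
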